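/- Let p1, p2, q1, q2, r1, r2 : ℝ → ℝ be smooth nonvanishing coefficient functions and let g, h, m : ℝ → ℝ be smooth with g, h nonvanishing. Set ξ(t,x,y) = h(t)x − g(t)y and ν(t) = g''/(2p1q2g) + r1h''/(2p2q2h) − r1h'p2'/(2p2²q2h) − p1'g'/(2p1²q2g). Suppose Ψ(ξ,t) (complex-valued) and Ŵ(ξ,t) (real-valued) are smooth and satisfy the reduced system: i Ψ_t + (p1h² + p2g²)Ψ_ξξ + i[((g'/g) + (h'/h))ξ − 2p1hm/g]Ψ_ξ + [−p1m²/g² + (i/2)((g'/g) + (h'/h))]Ψ = q1|Ψ|²Ψ + q2ΨŴ and (r1g² + h²)Ŵ_ξξ = r2g²(|Ψ|²)_ξξ + ν(t). Define ψ(t,x,y) = exp{i[(g'/(4p1g))x² + (h'/(4p2h))y² − (m/g)x]} Ψ(ξ(t,x,y), t) and w(t,x,y) = −(1/(4q2g))(g'/p1)'(t) x² − (1/(4q2h))(h'/p2)'(t) y² + (m'/(q2g))x + Ŵ(ξ(t,x,y), t). Then (ψ, w) is a solution of the vcDS system i ψ_t + p1ψ_xx + p2ψ_yy = q1|ψ|²ψ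 + q2ψw, w_xx + r1w_yy = r2(|ψ|²)_yy. -/

import Mathlib

noncomputable section

/-- Partial derivative in the first (time) variable. -/
def dt3 (f : ℝ → ℝ → ℝ → ℂ) : ℝ → ℝ → ℝ → ℂ := fun t x y => deriv (fun s => f s x y) t

/-- Partial derivative in the second (x) variable. -/
def dx3 (f : ℝ → ℝ → ℝ → ℂ) : ℝ → ℝ → ℝ → ℂ := fun t x y => deriv (fun s => f t s y) x

/-- Partial derivative in the third (y) variable. -/
def dy3 (f : ℝ → ℝ → ℝ → ℂ) : ℝ → ℝ → ℝ → ℂ := fun t x y => deriv (fun s => f t x s) y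

/-- Partial derivative in the second (x) variable, real-valued functions. -/
def rx3 (f : ℝ → ℝ → ℝ → ℝ) : ℝ → ℝ → ℝ → ℝ := fun t x y => deriv (fun s => f t s y) x

/-- Partial derivative in the third (y) variable, real-valued functions. -/
def ry3 (f : ℝ → ℝ → ℝ → ℝ) : ℝ → ℝ → ℝ → ℝ := fun t x y => deriv (fun s => f t x s) y

/-- Smoothness of a complex-valued function of (t,x,y). -/
def Smooth3C (f : ℝ → ℝ → ℝ → ℂ) : Prop :=
  ContDiff ℝ (⊤ : ℕ∞) (fun p : ℝ × ℝ × ℝ => f p.1 p.2.1 p.2.2)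

/-- Smoothness of a real-valued function of (t,x,y). -/
def Smooth3R (f : ℝ → ℝ → ℝ → ℝ) : Prop :=
  ContDiff ℝ (⊤ : ℕ∞) (fun p : ℝ × ℝ × ℝ => f p.1 p.2.1 p.2.2)

/-- The Davey–Stewartson system with constants ε₁, ε₂, δ₁, δ₂ holds at the point (t,x,y):
`i ψ_t + ψ_xx + ε₁ ψ_yy = ε₂ |ψ|² ψ + ψ w`, `w_xx + δ₁ w_yy = δ₂ (|ψ|²)_yy`. -/
def DSAt (ε1 ε2 δ1 δ2 : ℝ) (ψ : ℝ → ℝ → ℝ → ℂ) (w : ℝ → ℝ → ℝ → ℝ)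
    (t x y : ℝ) : Prop :=
  Complex.I * dt3 ψ t x y + dx3 (dx3 ψ) t x y + (ε1 : ℂ) * dy3 (dy3 ψ) t x y
      = (ε2 : ℂ) * (‖ψ t x y‖)^2 * ψ t x y + ψ t x y * (w t x y : ℂ)
    ∧ rx3 (rx3 w) t x y + δ1 * ry3 (ry3 w) t x y
      = δ2 * ry3 (ry3 (fun t x y => (‖ψ t x y‖)^2)) t x y

/-- (ψ, w) is a solution of the Davey–Stewartson system everywhere. -/
def IsDSSolution (ε1 ε2 δ1 δ2 : ℝ) (ψ : ℝ → ℝ → ℝ → ℂ) (w : ℝ → ℝ → ℝ → ℝ) : Prop :=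
  ∀ t x y : ℝ, DSAt ε1 ε2 δ1 δ2 ψ w t x y

/-- The variable coefficient Davey–Stewartson system with coefficient functions
p₁,p₂,q₁,q₂,r₁,r₂ of t holds at the point (t,x,y):
`i ψ_t + p₁ψ_xx + p₂ψ_yy = q₁|ψ|²ψ + q₂ψw`, `w_xx + r₁w_yy = r₂(|ψ|²)_yy`. -/
def vcDSAt (p1 p2 q1 q2 r1 r2 : ℝ → ℝ) (ψ : ℝ → ℝ → ℝ → ℂ) (w : ℝ → ℝ → ℝ → ℝ)
    (t x y : ℝ) : Prop :=
  Complex.I * dt3 ψ t x y + (p1 t : ℂ) * dx3 (dx3 ψ) t x y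
      + (p2 t : ℂ) * dy3 (dy3 ψ) t x y
      = (q1 t : ℂ) * (‖ψ t x y‖)^2 * ψ t x y
        + (q2 t : ℂ) * ψ t x y * (w t x y : ℂ)
    ∧ rx3 (rx3 w) t x y + r1 t * ry3 (ry3 w) t x y
      = r2 t * ry3 (ry3 (fun t x y => (‖ψ t x y‖)^2)) t x y

/-- (ψ, w) is a solution of the vcDS system everywhere. -/
def IsVcDSSolution (p1 p2 q1 q2 r1 r2 : ℝ → ℝ)
    (ψ : ℝ → ℝ → ℝ → ℂ) (w : ℝ → ℝ → ℝ → ℝ) : Prop :=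
  ∀ t x y : ℝ, vcDSAt p1 p2 q1 q2 r1 r2 ψ w t x y

/-- ξ-derivative of a complex function of (ξ,t). -/
def dXiC (F : ℝ → ℝ → ℂ) : ℝ → ℝ → ℂ := fun ξ t => deriv (fun s => F s t) ξ

/-- t-derivative of a complex function of (ξ,t). -/
def dTC (F : ℝ → ℝ → ℂ) : ℝ → ℝ → ℂ := fun ξ t => deriv (fun s => F ξ s) t

/-- ξ-derivative of a real function of (ξ,t). -/
def dXiR (F : ℝ → ℝ → ℝ) : ℝ → ℝ → ℝ := fun ξ t => deriv (fun s => F s t) ξ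

/-! With `ξ = h x - g y` and the quadratic phase `φ = A x² + B y² - C x`, every derivative of
`ψ = e^{iφ} Ψ(ξ, t)` is `e^{iφ}` times a combination of `Ψ, Ψ_ξ, Ψ_ξξ, Ψ_t` at `(ξ, t)`. For
`A = g'/(4p₁g)`, `B = h'/(4p₂h)`, `C = m/g` the coefficients of `Ψ_ξ` and the imaginary part of the
coefficient of `Ψ` become those of the reduced equation, while the quadratic part of `w` absorbs
the real part coming from `φ_t`. In the constraint the quadratic part of `w` contributes a function
of `t` alone, which `ν` cancels. -/

open Complex

section PartialDerivatives

variable {E : Type*} [NormedAddCommGroup E] [NormedSpace ℝ E] {F : ℝ → ℝ → E}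

theorem hasDerivAt_comp_fst (hF : Differentiable ℝ fun p : ℝ × ℝ => F p.1 p.2)
    {c : ℝ → ℝ} {k x : ℝ} (hc : HasDerivAt c k x) (b : ℝ) :
    HasDerivAt (fun s => F (c s) b) (k • deriv (fun s => F s b) (c x)) x :=
  ((hF _).comp (c x) (differentiableAt_id.prodMk (differentiableAt_const b))).hasDerivAt.scomp x hc

theorem hasDerivAt_comp_diag (hF : Differentiable ℝ fun p : ℝ × ℝ => F p.1 p.2)
    {c : ℝ → ℝ} {k t : ℝ} (hc : HasDerivAt c k t) :
    HasDerivAt (fun s => F (c s) s)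
      (k • deriv (fun s => F s t) (c t) + deriv (fun s => F (c t) s) t) t := by
  set L := fderiv ℝ (fun p : ℝ × ℝ => F p.1 p.2) (c t, t)
  have hL : HasFDerivAt (fun p : ℝ × ℝ => F p.1 p.2) L (c t, t) := (hF _).hasFDerivAt
  have hx : HasDerivAt (fun s : ℝ => (s, t)) (1, 0) (c t) :=
    (hasDerivAt_id' (c t)).prodMk (hasDerivAt_const (c t) t)
  have hy : HasDerivAt (fun s : ℝ => (c t, s)) (0, 1) t :=
    (hasDerivAt_const t (c t)).prodMk (hasDerivAt_id' t)
  have hdiag : HasDerivAt (fun s : ℝ => (c s, s)) (k, 1) t := hc.prodMk (hasDerivAt_id' t)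
  have h₁ : HasDerivAt (fun s => F s t) (L (1, 0)) (c t) := hL.comp_hasDerivAt_of_eq (c t) hx rfl
  have h₂ : HasDerivAt (fun s => F (c t) s) (L (0, 1)) t := hL.comp_hasDerivAt_of_eq t hy rfl
  have hdir : k • ((1 : ℝ), (0 : ℝ)) + (0, 1) = (k, 1) := by simp
  rw [h₁.deriv, h₂.deriv, ← L.map_smul, ← L.map_add, hdir]
  exact hL.comp_hasDerivAt_of_eq t hdiag rfl

theorem contDiff_deriv_fst {n : WithTop ℕ∞} (hF : ContDiff ℝ (n + 1) fun p : ℝ × ℝ => F p.1 p.2) :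
    ContDiff ℝ n fun p : ℝ × ℝ => deriv (fun s => F s p.2) p.1 := by
  have hdiff : Differentiable ℝ fun p : ℝ × ℝ => F p.1 p.2 := hF.differentiable (by simp)
  have hpartial : (fun p : ℝ × ℝ => deriv (fun s => F s p.2) p.1)
      = fun p => fderiv ℝ (fun p : ℝ × ℝ => F p.1 p.2) p (1, 0) := by
    funext p
    exact ((hdiff p).hasFDerivAt.comp_hasDerivAt p.1
      ((hasDerivAt_id' p.1).prodMk (hasDerivAt_const p.1 p.2))).deriv
  rw [hpartial]
  exact (hF.fderiv_right le_rfl).clm_apply contDiff_const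

theorem deriv_deriv_add_comp_fst (hF : ContDiff ℝ 2 fun p : ℝ × ℝ => F p.1 p.2)
    {q q' : ℝ → E} {q'' : E} {c : ℝ → ℝ} {k : ℝ} {x : ℝ}
    (hq : ∀ s, HasDerivAt q (q' s) s) (hq' : HasDerivAt q' q'' x)
    (hc : ∀ s, HasDerivAt c k s) (b : ℝ) :
    deriv (deriv fun s => q s + F (c s) b) x
      = q'' + k ^ 2 • deriv (fun s => deriv (fun r => F r b) s) (c x) := by
  have hF' := contDiff_deriv_fst (n := 1) hF
  have h₁ : deriv (fun s => q s + F (c s) b) = fun s => q' s + k • deriv (fun r => F r b) (c s) :=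
    funext fun s => ((hq s).add (hasDerivAt_comp_fst (hF.differentiable two_ne_zero) (hc s) b)).deriv
  rw [h₁, sq, ← smul_smul]
  exact (hq'.add ((hasDerivAt_comp_fst (F := fun a b => deriv (fun s => F s b) a)
    (hF'.differentiable one_ne_zero) (hc x) b).const_smul k)).deriv

theorem deriv_deriv_comp_fst (hF : ContDiff ℝ 2 fun p : ℝ × ℝ => F p.1 p.2)
    {c : ℝ → ℝ} {k : ℝ} (hc : ∀ s, HasDerivAt c k s) (b x : ℝ) :
    deriv (deriv fun s => F (c s) b) x = k ^ 2 • deriv (fun s => deriv (fun r => F r b) s) (c x) := by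
  simpa using deriv_deriv_add_comp_fst hF (fun s => hasDerivAt_const s (0 : E))
    (hasDerivAt_const x (0 : E)) hc b

end PartialDerivatives

theorem deriv_deriv_exp_mul {φ φ' : ℝ → ℝ} {φ'' : ℝ} {u u' : ℝ → ℂ} {u'' : ℂ} {x : ℝ}
    (hφ : ∀ s, HasDerivAt φ (φ' s) s) (hφ' : HasDerivAt φ' φ'' x)
    (hu : ∀ s, HasDerivAt u (u' s) s) (hu' : HasDerivAt u' u'' x) :
    deriv (deriv fun s => cexp (I * φ s) * u s) x
      = cexp (I * φ x) * (u'' + 2 * I * φ' x * u' x + (I * φ'' - φ' x ^ 2) * u x) := by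
  have hE : ∀ s, HasDerivAt (fun s => cexp (I * φ s)) (cexp (I * φ s) * (I * φ' s)) s :=
    fun s => ((hφ s).ofReal_comp.const_mul I).cexp
  have h₁ : deriv (fun s => cexp (I * φ s) * u s)
      = fun s => cexp (I * φ s) * (I * φ' s) * u s + cexp (I * φ s) * u' s :=
    funext fun s => ((hE s).mul (hu s)).deriv
  rw [h₁]
  refine ((((hE x).mul (hφ'.ofReal_comp.const_mul I)).mul (hu x)).add ((hE x).mul hu')).deriv.trans ?_
  simp only [Pi.mul_apply]
  linear_combination cexp (I * φ x) * φ' x ^ 2 * u x * I_sq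

theorem deriv_deriv_exp_mul_comp_fst {F : ℝ → ℝ → ℂ} (hF : ContDiff ℝ 2 fun p : ℝ × ℝ => F p.1 p.2)
    {φ φ' : ℝ → ℝ} {φ'' : ℝ} {c : ℝ → ℝ} {k x : ℝ}
    (hφ : ∀ s, HasDerivAt φ (φ' s) s) (hφ' : HasDerivAt φ' φ'' x)
    (hc : ∀ s, HasDerivAt c k s) (b : ℝ) :
    deriv (deriv fun s => cexp (I * φ s) * F (c s) b) x
      = cexp (I * φ x) * (k ^ 2 * deriv (fun s => deriv (fun r => F r b) s) (c x)
          + 2 * I * φ' x * k * deriv (fun r => F r b) (c x)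
          + (I * φ'' - φ' x ^ 2) * F (c x) b) := by
  have hF' := contDiff_deriv_fst (n := 1) hF
  rw [deriv_deriv_exp_mul hφ hφ'
    (fun s => hasDerivAt_comp_fst (hF.differentiable two_ne_zero) (hc s) b)
    ((hasDerivAt_comp_fst (F := fun a b => deriv (fun s => F s b) a)
      (hF'.differentiable one_ne_zero) (hc x) b).const_smul k)]
  simp only [real_smul]
  ring

section ChirpAnsatz

variable (A B C g h : ℝ → ℝ)

def chirpPhase (t x y : ℝ) : ℝ := A t * x ^ 2 + B t * y ^ 2 - C t * x

def chirpAnsatz (Ψ : ℝ → ℝ → ℂ) (t x y : ℝ) : ℂ :=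
  cexp (I * chirpPhase A B C t x y) * Ψ (h t * x - g t * y) t

variable {A B C g h}

theorem hasDerivAt_chirpPhase_x (t x y : ℝ) :
    HasDerivAt (fun s => chirpPhase A B C t s y) (2 * A t * x - C t) x := by
  refine ((((hasDerivAt_pow 2 x).const_mul (A t)).add_const (B t * y ^ 2)).sub
    (hasDerivAt_const_mul (C t))).congr_deriv ?_
  norm_num
  ring

theorem hasDerivAt_chirpPhase_y (t x y : ℝ) :
    HasDerivAt (fun s => chirpPhase A B C t x s) (2 * B t * y) y := by
  refine ((((hasDerivAt_pow 2 y).const_mul (B t)).const_add (A t * x ^ 2)).sub_const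
    (C t * x)).congr_deriv ?_
  norm_num
  ring

theorem hasDerivAt_chirpPhase_t {A' B' C' t : ℝ} (hA : HasDerivAt A A' t) (hB : HasDerivAt B B' t)
    (hC : HasDerivAt C C' t) (x y : ℝ) :
    HasDerivAt (fun s => chirpPhase A B C s x y) (A' * x ^ 2 + B' * y ^ 2 - C' * x) t :=
  ((hA.mul_const _).add (hB.mul_const _)).sub (hC.mul_const _)

theorem norm_chirpAnsatz (Ψ : ℝ → ℝ → ℂ) (t x y : ℝ) :
    ‖chirpAnsatz A B C g h Ψ t x y‖ = ‖Ψ (h t * x - g t * y) t‖ := by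
  rw [chirpAnsatz, norm_mul, mul_comm I, norm_exp_ofReal_mul_I, one_mul]

variable {Ψ : ℝ → ℝ → ℂ}

theorem chirpAnsatz_dt (hΨ : Differentiable ℝ fun p : ℝ × ℝ => Ψ p.1 p.2)
    {A' B' C' g' h' t : ℝ} (hA : HasDerivAt A A' t) (hB : HasDerivAt B B' t)
    (hC : HasDerivAt C C' t) (hg : HasDerivAt g g' t) (hh : HasDerivAt h h' t) (x y : ℝ) :
    dt3 (chirpAnsatz A B C g h Ψ) t x y
      = cexp (I * chirpPhase A B C t x y)
        * (I * (A' * x ^ 2 + B' * y ^ 2 - C' * x) * Ψ (h t * x - g t * y) t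
          + (h' * x - g' * y) * dXiC Ψ (h t * x - g t * y) t + dTC Ψ (h t * x - g t * y) t) := by
  have hphase := ((hasDerivAt_chirpPhase_t hA hB hC x y).ofReal_comp.const_mul I).cexp
  have hline : HasDerivAt (fun s => h s * x - g s * y) (h' * x - g' * y) t :=
    (hh.mul_const x).sub (hg.mul_const y)
  refine (hphase.mul (hasDerivAt_comp_diag hΨ hline)).deriv.trans ?_
  simp only [real_smul, dXiC, dTC]
  push_cast
  ring

theorem chirpAnsatz_dxx (hΨ : ContDiff ℝ 2 fun p : ℝ × ℝ => Ψ p.1 p.2) (t x y : ℝ) :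
    dx3 (dx3 (chirpAnsatz A B C g h Ψ)) t x y
      = cexp (I * chirpPhase A B C t x y)
        * (h t ^ 2 * dXiC (dXiC Ψ) (h t * x - g t * y) t
          + 2 * I * (2 * A t * x - C t) * h t * dXiC Ψ (h t * x - g t * y) t
          + (2 * I * A t - (2 * A t * x - C t) ^ 2) * Ψ (h t * x - g t * y) t) := by
  refine (deriv_deriv_exp_mul_comp_fst hΨ (hasDerivAt_chirpPhase_x t · y)
    ((hasDerivAt_const_mul (2 * A t)).sub_const (C t))
    (fun _ => (hasDerivAt_const_mul (h t)).sub_const (g t * y)) t).trans ?_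
  simp only [dXiC]
  push_cast
  ring

theorem chirpAnsatz_dyy (hΨ : ContDiff ℝ 2 fun p : ℝ × ℝ => Ψ p.1 p.2) (t x y : ℝ) :
    dy3 (dy3 (chirpAnsatz A B C g h Ψ)) t x y
      = cexp (I * chirpPhase A B C t x y)
        * (g t ^ 2 * dXiC (dXiC Ψ) (h t * x - g t * y) t
          - 2 * I * (2 * B t * y) * g t * dXiC Ψ (h t * x - g t * y) t
          + (2 * I * B t - (2 * B t * y) ^ 2) * Ψ (h t * x - g t * y) t) := by
  refine (deriv_deriv_exp_mul_comp_fst hΨ (hasDerivAt_chirpPhase_y t x ·)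
    (hasDerivAt_const_mul (2 * B t))
    (fun _ => (hasDerivAt_const_mul (g t)).const_sub (h t * x)) t).trans ?_
  simp only [dXiC]
  push_cast
  ring

theorem chirpAnsatz_normSq_dyy (hΨ : ContDiff ℝ 2 fun p : ℝ × ℝ => Ψ p.1 p.2) (t x y : ℝ) :
    ry3 (ry3 fun t x y => ‖chirpAnsatz A B C g h Ψ t x y‖ ^ 2) t x y
      = g t ^ 2 * dXiR (dXiR fun ξ t => ‖Ψ ξ t‖ ^ 2) (h t * x - g t * y) t := by
  have h₂ := deriv_deriv_comp_fst (F := fun ξ t => ‖Ψ ξ t‖ ^ 2) ((contDiff_norm_sq ℝ).comp hΨ)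
    (fun _ => (hasDerivAt_const_mul (g t)).const_sub (h t * x)) t y
  rw [neg_sq] at h₂
  simp only [norm_chirpAnsatz]
  exact h₂

theorem chirpAnsatz_linear_part (hΨ : ContDiff ℝ 2 fun p : ℝ × ℝ => Ψ p.1 p.2)
    {A' B' C' g' h' t : ℝ} (hA : HasDerivAt A A' t) (hB : HasDerivAt B B' t)
    (hC : HasDerivAt C C' t) (hg : HasDerivAt g g' t) (hh : HasDerivAt h h' t) (p q x y : ℝ) :
    I * dt3 (chirpAnsatz A B C g h Ψ) t x y + p * dx3 (dx3 (chirpAnsatz A B C g h Ψ)) t x y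
        + q * dy3 (dy3 (chirpAnsatz A B C g h Ψ)) t x y
      = cexp (I * chirpPhase A B C t x y)
        * (I * dTC Ψ (h t * x - g t * y) t
          + (p * h t ^ 2 + q * g t ^ 2) * dXiC (dXiC Ψ) (h t * x - g t * y) t
          + I * (h' * x - g' * y + 2 * p * h t * (2 * A t * x - C t) - 2 * q * g t * (2 * B t * y))
            * dXiC Ψ (h t * x - g t * y) t
          + (-(A' * x ^ 2 + B' * y ^ 2 - C' * x) - p * (2 * A t * x - C t) ^ 2
              - q * (2 * B t * y) ^ 2 + I * (2 * p * A t + 2 * q * B t))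
            * Ψ (h t * x - g t * y) t) := by
  rw [chirpAnsatz_dt (hΨ.differentiable two_ne_zero) hA hB hC hg hh, chirpAnsatz_dxx hΨ,
    chirpAnsatz_dyy hΨ]
  linear_combination cexp (I * chirpPhase A B C t x y) * (A' * x ^ 2 + B' * y ^ 2 - C' * x)
    * Ψ (h t * x - g t * y) t * I_sq

end ChirpAnsatz

section MeanFlowAnsatz

def meanFlowAnsatz (α β γ g h : ℝ → ℝ) (W : ℝ → ℝ → ℝ) (t x y : ℝ) : ℝ :=
  α t * x ^ 2 - β t * y ^ 2 + γ t * x + W (h t * x - g t * y) t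

variable {α β γ g h : ℝ → ℝ} {W : ℝ → ℝ → ℝ}

theorem meanFlowAnsatz_dxx (hW : ContDiff ℝ 2 fun p : ℝ × ℝ => W p.1 p.2) (t x y : ℝ) :
    rx3 (rx3 (meanFlowAnsatz α β γ g h W)) t x y
      = 2 * α t + h t ^ 2 * dXiR (dXiR W) (h t * x - g t * y) t := by
  have hq (s : ℝ) : HasDerivAt (fun s => α t * s ^ 2 - β t * y ^ 2 + γ t * s)
      (2 * α t * s + γ t) s := by
    refine ((((hasDerivAt_pow 2 s).const_mul (α t)).sub_const (β t * y ^ 2)).add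
      (hasDerivAt_const_mul (γ t))).congr_deriv ?_
    norm_num
    ring
  exact deriv_deriv_add_comp_fst hW hq ((hasDerivAt_const_mul (2 * α t)).add_const (γ t))
    (fun _ => (hasDerivAt_const_mul (h t)).sub_const (g t * y)) t

theorem meanFlowAnsatz_dyy (hW : ContDiff ℝ 2 fun p : ℝ × ℝ => W p.1 p.2) (t x y : ℝ) :
    ry3 (ry3 (meanFlowAnsatz α β γ g h W)) t x y
      = -(2 * β t) + g t ^ 2 * dXiR (dXiR W) (h t * x - g t * y) t := by
  have hq (s : ℝ) : HasDerivAt (fun s => α t * x ^ 2 - β t * s ^ 2 + γ t * x)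
      (-(2 * β t) * s) s := by
    refine ((((hasDerivAt_pow 2 s).const_mul (β t)).const_sub (α t * x ^ 2)).add_const
      (γ t * x)).congr_deriv ?_
    norm_num
    ring
  have h₂ := deriv_deriv_add_comp_fst (x := y) hW hq (hasDerivAt_const_mul (-(2 * β t)))
    (fun _ => (hasDerivAt_const_mul (g t)).const_sub (h t * x)) t
  rw [neg_sq] at h₂
  exact h₂

end MeanFlowAnsatz

theorem hasDerivAt_div_four_mul_mul {u p g : ℝ → ℝ} {a' g' t : ℝ}
    (hu : HasDerivAt (fun s => u s / p s) a' t) (hg : HasDerivAt g g' t) (hg₀ : g t ≠ 0) :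
    HasDerivAt (fun s => u s / (4 * p s * g s)) ((a' * g t - u t / p t * g') / (4 * g t ^ 2)) t := by
  have hsplit : (fun s => u s / (4 * p s * g s)) = fun s => u s / p s / (4 * g s) := by
    funext s
    ring
  rw [hsplit]
  refine (hu.fun_div (hg.const_mul 4) (mul_ne_zero four_ne_zero hg₀)).congr_deriv ?_
  field_simp

section Reduction

variable (p1 p2 q1 q2 r1 r2 g h m : ℝ → ℝ) (Ψ : ℝ → ℝ → ℂ) (W : ℝ → ℝ → ℝ)

def reductionWave : ℝ → ℝ → ℝ → ℂ :=
  chirpAnsatz (fun t => deriv g t / (4 * p1 t * g t)) (fun t => deriv h t / (4 * p2 t * h t))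
    (fun t => m t / g t) g h Ψ

def reductionMeanFlow : ℝ → ℝ → ℝ → ℝ :=
  meanFlowAnsatz (fun t => -(1 / (4 * q2 t * g t)) * deriv (fun s => deriv g s / p1 s) t)
    (fun t => 1 / (4 * q2 t * h t) * deriv (fun s => deriv h s / p2 s) t)
    (fun t => deriv m t / (q2 t * g t)) g h W

def ReducedWaveEqAt (ξ t : ℝ) : Prop :=
  I * dTC Ψ ξ t
      + ((p1 t * (h t)^2 + p2 t * (g t)^2 : ℝ) : ℂ) * dXiC (dXiC Ψ) ξ t
      + I * (((deriv g t / g t + deriv h t / h t) * ξ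
            - 2 * p1 t * h t * m t / g t : ℝ) : ℂ) * dXiC Ψ ξ t
      + (((-(p1 t) * (m t)^2 / (g t)^2 : ℝ) : ℂ)
          + I * (((1/2) * (deriv g t / g t + deriv h t / h t) : ℝ) : ℂ)) * Ψ ξ t
    = (q1 t : ℂ) * (‖Ψ ξ t‖)^2 * Ψ ξ t + (q2 t : ℂ) * Ψ ξ t * ((W ξ t : ℝ) : ℂ)

def ReducedConstraintAt (ν : ℝ → ℝ) (ξ t : ℝ) : Prop :=
  (r1 t * (g t)^2 + (h t)^2) * dXiR (dXiR W) ξ t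
    = r2 t * (g t)^2 * dXiR (dXiR (fun s t => (‖Ψ s t‖)^2)) ξ t + ν t

variable {p1 p2 q1 q2 r1 r2 g h m Ψ W}

theorem reductionWave_solves_wave_eq {t x y : ℝ} (hΨ : ContDiff ℝ 2 fun p : ℝ × ℝ => Ψ p.1 p.2)
    (hg : DifferentiableAt ℝ g t) (hh : DifferentiableAt ℝ h t) (hm : DifferentiableAt ℝ m t)
    (hg₂ : DifferentiableAt ℝ (deriv g) t) (hh₂ : DifferentiableAt ℝ (deriv h) t)
    (hp1 : DifferentiableAt ℝ p1 t) (hp2 : DifferentiableAt ℝ p2 t)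
    (hp1₀ : p1 t ≠ 0) (hp2₀ : p2 t ≠ 0) (hq2₀ : q2 t ≠ 0) (hg₀ : g t ≠ 0) (hh₀ : h t ≠ 0)
    (hred : ReducedWaveEqAt p1 p2 q1 q2 g h m Ψ W (h t * x - g t * y) t) :
    I * dt3 (reductionWave p1 p2 g h m Ψ) t x y
        + p1 t * dx3 (dx3 (reductionWave p1 p2 g h m Ψ)) t x y
        + p2 t * dy3 (dy3 (reductionWave p1 p2 g h m Ψ)) t x y
      = q1 t * ‖reductionWave p1 p2 g h m Ψ t x y‖ ^ 2 * reductionWave p1 p2 g h m Ψ t x y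
        + q2 t * reductionWave p1 p2 g h m Ψ t x y * (reductionMeanFlow p1 p2 q2 g h m W t x y : ℂ) := by
  have hA := hasDerivAt_div_four_mul_mul (hg₂.fun_div hp1 hp1₀).hasDerivAt hg.hasDerivAt hg₀
  have hB := hasDerivAt_div_four_mul_mul (hh₂.fun_div hp2 hp2₀).hasDerivAt hh.hasDerivAt hh₀
  have hC := hm.hasDerivAt.fun_div hg.hasDerivAt hg₀
  simp only [reductionWave, reductionMeanFlow]
  rw [chirpAnsatz_linear_part hΨ hA hB hC hg.hasDerivAt hh.hasDerivAt, norm_chirpAnsatz]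
  simp only [chirpAnsatz, meanFlowAnsatz]
  unfold ReducedWaveEqAt at hred
  have hξ : deriv h t * x - deriv g t * y
      + 2 * p1 t * h t * (2 * (deriv g t / (4 * p1 t * g t)) * x - m t / g t)
      - 2 * p2 t * g t * (2 * (deriv h t / (4 * p2 t * h t)) * y)
      = (deriv g t / g t + deriv h t / h t) * (h t * x - g t * y)
        - 2 * p1 t * h t * m t / g t := by
    field_simp
    ring
  have him : 2 * p1 t * (deriv g t / (4 * p1 t * g t)) + 2 * p2 t * (deriv h t / (4 * p2 t * h t))
      = 1 / 2 * (deriv g t / g t + deriv h t / h t) := by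
    field_simp
    ring
  have hre : -((deriv (fun s => deriv g s / p1 s) t * g t - deriv g t / p1 t * deriv g t)
          / (4 * g t ^ 2) * x ^ 2
        + (deriv (fun s => deriv h s / p2 s) t * h t - deriv h t / p2 t * deriv h t)
          / (4 * h t ^ 2) * y ^ 2
        - (deriv m t * g t - m t * deriv g t) / g t ^ 2 * x)
      - p1 t * (2 * (deriv g t / (4 * p1 t * g t)) * x - m t / g t) ^ 2
      - p2 t * (2 * (deriv h t / (4 * p2 t * h t)) * y) ^ 2
      = -p1 t * m t ^ 2 / g t ^ 2 + q2 t * (-(1 / (4 * q2 t * g t))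
          * deriv (fun s => deriv g s / p1 s) t * x ^ 2
        - 1 / (4 * q2 t * h t) * deriv (fun s => deriv h s / p2 s) t * y ^ 2
        + deriv m t / (q2 t * g t) * x) := by
    field_simp
    ring
  set E := cexp (I * chirpPhase (fun s => deriv g s / (4 * p1 s * g s))
    (fun s => deriv h s / (4 * p2 s * h s)) (fun s => m s / g s) t x y)
  set ξ := h t * x - g t * y
  have hξ' := congrArg ofReal hξ
  have him' := congrArg ofReal him
  have hre' := congrArg ofReal hre
  push_cast at hred hξ' him' hre' ⊢
  linear_combination E * hred + I * E * dXiC Ψ ξ t * hξ' + I * E * Ψ ξ t * him'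
    + E * Ψ ξ t * hre'

theorem reductionMeanFlow_solves_constraint {ν : ℝ → ℝ} {t x y : ℝ}
    (hΨ : ContDiff ℝ 2 fun p : ℝ × ℝ => Ψ p.1 p.2) (hW : ContDiff ℝ 2 fun p : ℝ × ℝ => W p.1 p.2)
    (hg₂ : DifferentiableAt ℝ (deriv g) t) (hh₂ : DifferentiableAt ℝ (deriv h) t)
    (hp1 : DifferentiableAt ℝ p1 t) (hp2 : DifferentiableAt ℝ p2 t)
    (hp1₀ : p1 t ≠ 0) (hp2₀ : p2 t ≠ 0) (hq2₀ : q2 t ≠ 0) (hg₀ : g t ≠ 0) (hh₀ : h t ≠ 0)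
    (hν : ν t = deriv (deriv g) t / (2 * p1 t * q2 t * g t)
      + r1 t * deriv (deriv h) t / (2 * p2 t * q2 t * h t)
      - r1 t * deriv h t * deriv p2 t / (2 * (p2 t)^2 * q2 t * h t)
      - deriv p1 t * deriv g t / (2 * (p1 t)^2 * q2 t * g t))
    (hred : ReducedConstraintAt r1 r2 g h Ψ W ν (h t * x - g t * y) t) :
    rx3 (rx3 (reductionMeanFlow p1 p2 q2 g h m W)) t x y
        + r1 t * ry3 (ry3 (reductionMeanFlow p1 p2 q2 g h m W)) t x y
      = r2 t * ry3 (ry3 fun t x y => ‖reductionWave p1 p2 g h m Ψ t x y‖ ^ 2) t x y := by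
  have hpotential : -(2 * (1 / (4 * q2 t * g t)) * deriv (fun s => deriv g s / p1 s) t)
      - r1 t * (2 * (1 / (4 * q2 t * h t) * deriv (fun s => deriv h s / p2 s) t)) + ν t = 0 := by
    rw [hν, deriv_fun_div hg₂ hp1 hp1₀, deriv_fun_div hh₂ hp2 hp2₀]
    field_simp
    ring
  simp only [reductionWave, reductionMeanFlow]
  rw [meanFlowAnsatz_dxx hW, meanFlowAnsatz_dyy hW, chirpAnsatz_normSq_dyy hΨ]
  unfold ReducedConstraintAt at hred
  linear_combination hred + hpotential

end Reduction

theorem vcds_generic_symmetry_reduction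
    (p1 p2 q1 q2 r1 r2 : ℝ → ℝ)
    (hp1 : ContDiff ℝ (⊤ : ℕ∞) p1) (hp2 : ContDiff ℝ (⊤ : ℕ∞) p2)
    (hp1ne : ∀ t : ℝ, p1 t ≠ 0) (hp2ne : ∀ t : ℝ, p2 t ≠ 0)
    (hq2ne : ∀ t : ℝ, q2 t ≠ 0)
    (g h m : ℝ → ℝ)
    (hg : ContDiff ℝ (⊤ : ℕ∞) g) (hh : ContDiff ℝ (⊤ : ℕ∞) h)
    (hm : ContDiff ℝ (⊤ : ℕ∞) m)
    (hgne : ∀ t : ℝ, g t ≠ 0) (hhne : ∀ t : ℝ, h t ≠ 0)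
    (ν : ℝ → ℝ)
    (hν : ∀ t : ℝ, ν t =
      deriv (deriv g) t / (2 * p1 t * q2 t * g t)
      + r1 t * deriv (deriv h) t / (2 * p2 t * q2 t * h t)
      - r1 t * deriv h t * deriv p2 t / (2 * (p2 t)^2 * q2 t * h t)
      - deriv p1 t * deriv g t / (2 * (p1 t)^2 * q2 t * g t))
    (Ψ : ℝ → ℝ → ℂ) (What : ℝ → ℝ → ℝ)
    (hΨ : ContDiff ℝ (⊤ : ℕ∞) (fun p : ℝ × ℝ => Ψ p.1 p.2))
    (hWhat : ContDiff ℝ (⊤ : ℕ∞) (fun p : ℝ × ℝ => What p.1 p.2))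
    (hred1 : ∀ ξ t : ℝ,
      Complex.I * dTC Ψ ξ t
        + ((p1 t * (h t)^2 + p2 t * (g t)^2 : ℝ) : ℂ) * dXiC (dXiC Ψ) ξ t
        + Complex.I * (((deriv g t / g t + deriv h t / h t) * ξ
              - 2 * p1 t * h t * m t / g t : ℝ) : ℂ) * dXiC Ψ ξ t
        + (((-(p1 t) * (m t)^2 / (g t)^2 : ℝ) : ℂ)
            + Complex.I * (((1/2) * (deriv g t / g t + deriv h t / h t) : ℝ) : ℂ)) * Ψ ξ t
      = (q1 t : ℂ) * (‖Ψ ξ t‖)^2 * Ψ ξ t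
        + (q2 t : ℂ) * Ψ ξ t * ((What ξ t : ℝ) : ℂ))
    (hred2 : ∀ ξ t : ℝ,
      (r1 t * (g t)^2 + (h t)^2) * dXiR (dXiR What) ξ t
        = r2 t * (g t)^2 * dXiR (dXiR (fun s t => (‖Ψ s t‖)^2)) ξ t + ν t) :
    IsVcDSSolution p1 p2 q1 q2 r1 r2
      (fun t x y => Complex.exp (Complex.I
          * (((deriv g t / (4 * p1 t * g t)) * x^2 + (deriv h t / (4 * p2 t * h t)) * y^2
              - (m t / g t) * x : ℝ) : ℂ))
        * Ψ (h t * x - g t * y) t)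
      (fun t x y =>
        -(1 / (4 * q2 t * g t)) * deriv (fun s => deriv g s / p1 s) t * x^2
        - (1 / (4 * q2 t * h t)) * deriv (fun s => deriv h s / p2 s) t * y^2
        + (deriv m t / (q2 t * g t)) * x
        + What (h t * x - g t * y) t) := by
  have htwo : (2 : WithTop ℕ∞) ≤ ((⊤ : ℕ∞) : WithTop ℕ∞) := WithTop.coe_le_coe.mpr le_top
  have hΨ₂ := hΨ.of_le htwo
  have hg₂ := (hg.of_le htwo).differentiable_deriv_two
  have hh₂ := (hh.of_le htwo).differentiable_deriv_two
  have hdiff {f : ℝ → ℝ} (hf : ContDiff ℝ (⊤ : ℕ∞) f) : Differentiable ℝ f :=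
    hf.differentiable (by simp)
  intro t x y
  exact ⟨reductionWave_solves_wave_eq hΨ₂ (hdiff hg t) (hdiff hh t) (hdiff hm t) (hg₂ t) (hh₂ t)
      (hdiff hp1 t) (hdiff hp2 t) (hp1ne t) (hp2ne t) (hq2ne t) (hgne t) (hhne t) (hred1 _ t),
    reductionMeanFlow_solves_constraint hΨ₂ (hWhat.of_le htwo) (hg₂ t) (hh₂ t) (hdiff hp1 t)
      (hdiff hp2 t) (hp1ne t) (hp2ne t) (hq2ne t) (hgne t) (hhne t) (hν t) (hred2 _ t)⟩
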